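/- arXiv:1812.01163 — 9 statements merged into one kernel-verified Lean document; each statement's English description precedes it below -/
import Mathlib

section
/- Let T_m denote the m-th Chebyshev polynomial of the first kind. For n ≥ 4 and m = ⌈(1/2)√n(log₂(n)+1)⌉, |T_m(-1 - 2/n)| ≥ n. -/
/-!
Since `T_m(-x) = ±T_m(x)` and `T_m(cosh θ) = cosh(mθ) ≥ e^{mθ}/2`, it suffices to show
`m · arcosh(1 + 2/n) ≥ log(2n)`. With `c = 2/√n ≤ 1` we have `1 + 2/n = 1 + c²/2`, and
`arcosh(1 + c²/2) ≥ log(1 + c) ≥ c log 2`, the last step being `2^c ≤ 1 + c` (Bernoulli).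
The choice of `m` makes `m · c log 2 ≥ log n + log 2`.
-/

open Polynomial Chebyshev Real

theorem abs_eval_T_neg {R : Type*} [CommRing R] [LinearOrder R] [IsStrictOrderedRing R]
    (m : ℤ) (x : R) : |(T R m).eval (-x)| = |(T R m).eval x| := by
  rw [T_eval_neg, abs_mul]
  rcases Int.units_eq_one_or m.negOnePow with h | h <;> simp [h]

theorem exp_mul_arcosh_le_two_mul_eval_T (m : ℤ) {x : ℝ} (hx : 1 ≤ x) :
    exp (m * arcosh x) ≤ 2 * (T ℝ m).eval x := by
  rw [← cosh_arcosh hx, T_real_cosh, cosh_arcosh hx, cosh_eq]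
  linarith [exp_pos (-(m * arcosh x))]

theorem mul_log_two_le_log_one_add {c : ℝ} (hc₀ : 0 ≤ c) (hc₁ : c ≤ 1) :
    c * log 2 ≤ log (1 + c) := by
  have hbernoulli := rpow_one_add_le_one_add_mul_self (s := 1) (by norm_num) hc₀ hc₁
  rw [← log_rpow two_pos]
  exact log_le_log (by positivity) (by norm_num at hbernoulli ⊢; linarith)

theorem log_one_add_le_arcosh {c : ℝ} (hc : 0 ≤ c) :
    log (1 + c) ≤ arcosh (1 + c ^ 2 / 2) := by
  have h1c : 0 < 1 + c := by linarith
  rw [← arcosh_cosh (log_nonneg (by linarith)), arcosh_le_arcosh (cosh_pos _) (by positivity),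
    cosh_log h1c]
  field_simp
  nlinarith

theorem log_two_mul_le_mul_arcosh {n : ℝ} (hn : 4 ≤ n) :
    log (2 * n) ≤ 1 / 2 * √n * (logb 2 n + 1) * arcosh (1 + 2 / n) := by
  set c := 2 / √n with hc
  have hsqrt : 2 ≤ √n := le_sqrt_of_sq_le (by linarith)
  have hc₁ : c ≤ 1 := (div_le_one (by positivity)).2 hsqrt
  have hcsq : 1 + c ^ 2 / 2 = 1 + 2 / n := by
    rw [hc, div_pow, sq_sqrt (by positivity)]
    ring
  have harcosh : c * log 2 ≤ arcosh (1 + 2 / n) := hcsq ▸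
    (mul_log_two_le_log_one_add (by positivity) hc₁).trans (log_one_add_le_arcosh (by positivity))
  have hlogb : 0 ≤ logb 2 n := logb_nonneg one_lt_two (by linarith)
  calc log (2 * n) = 1 / 2 * √n * (logb 2 n + 1) * (c * log 2) := by
        rw [log_mul two_ne_zero (by positivity), logb, hc]
        field_simp
        ring
    _ ≤ 1 / 2 * √n * (logb 2 n + 1) * arcosh (1 + 2 / n) := by gcongr

theorem chebyshev_large_at_shifted_point (n : ℕ) (hn : 4 ≤ n)
    (m : ℕ) (hm : m = ⌈(1 / 2 : ℝ) * Real.sqrt n * (Real.logb 2 n + 1)⌉₊) :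
    |(Polynomial.Chebyshev.T ℝ m).eval (-1 - 2 / (n : ℝ))| ≥ n := by
  set x : ℝ := 1 + 2 / n
  have hx : 1 ≤ x := le_add_of_nonneg_right (by positivity)
  have hlog : log (2 * n) ≤ m * arcosh x :=
    (log_two_mul_le_mul_arcosh (by exact_mod_cast hn)).trans
      (mul_le_mul_of_nonneg_right (hm ▸ Nat.le_ceil _) (arcosh_nonneg hx))
  have hT : 2 * (n : ℝ) ≤ 2 * (T ℝ m).eval x := calc
    2 * (n : ℝ) = exp (log (2 * n)) := (exp_log (by positivity)).symm
    _ ≤ exp (m * arcosh x) := exp_le_exp.2 hlog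
    _ ≤ 2 * (T ℝ m).eval x := mod_cast exp_mul_arcosh_le_two_mul_eval_T m hx
  rw [show -1 - 2 / (n : ℝ) = -x by ring, abs_eval_T_neg]
  exact (by linarith : (n : ℝ) ≤ _).trans (le_abs_self _)
end

section
/- For n ≥ 4 there exists a polynomial g of one real variable of degree ⌈(1/2)√n(log₂(n)+1)⌉ such that the average of w·g(w)² over w ranging uniformly over the integers {-1, 0, 1, ..., n-2} is strictly negative. -/
/-!
Let `g` be the Chebyshev polynomial `T_m` rescaled so that `[0, n - 2]` is mapped onto `[-1, 1]`.
Then `|g| ≤ 1` at the points `w = 0, …, n - 2`, which therefore contribute at most `(n - 1)(n - 2)`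
to the sum. At `w = -1` the argument is `x = 1 + 2/(n - 2) > 1`, where `T_m` grows like
`(x + √(x² - 1))^m / 2 ≥ (1 + 2/√n)^m / 2`; by Bernoulli, `1 + a ≥ 2^a` for `a ∈ [0, 1]`, so the
choice of `m` makes this at least `2^(log₂ n + 1) / 2 = n`. The single term `-g(-1)² ≤ -n²` then
outweighs all the others.
-/

open Polynomial Polynomial.Chebyshev Real

theorem eval_T_add_div_two {K : Type*} [Field K] [NeZero (2 : K)] (m : ℕ) {u v : K}
    (huv : u * v = 1) : (T K m).eval ((u + v) / 2) = (u ^ m + v ^ m) / 2 := by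
  let := invertibleOfNonzero (two_ne_zero : (2 : K) ≠ 0)
  have h := congrArg (eval (u + v)) (dickson_one_one_eq_chebyshev_T K m)
  rw [dickson_one_one_eval_add_inv u v huv] at h
  simp only [eval_mul, eval_comp, eval_C, eval_X, eval_ofNat, invOf_eq_inv] at h
  rw [h, inv_mul_eq_div, mul_div_cancel_left₀ _ two_ne_zero]

theorem pow_div_two_le_eval_T_real (m : ℕ) {x : ℝ} (hx : 1 ≤ x) :
    (x + √(x ^ 2 - 1)) ^ m / 2 ≤ (T ℝ m).eval x := by
  set s := √(x ^ 2 - 1)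
  have hs : s ^ 2 = x ^ 2 - 1 := sq_sqrt (by nlinarith)
  have hsx : s ≤ x := by nlinarith [sqrt_nonneg (x ^ 2 - 1)]
  have h := eval_T_add_div_two m (u := x + s) (v := x - s) (by nlinarith)
  rw [show (x + s + (x - s)) / 2 = x by ring] at h
  rw [h]
  have : 0 ≤ (x - s) ^ m := pow_nonneg (by linarith) m
  linarith

theorem two_mul_le_one_add_two_div_sqrt_pow {N : ℝ} (hN : 4 ≤ N) {m : ℕ}
    (hm : 1 / 2 * √N * (logb 2 N + 1) ≤ m) : 2 * N ≤ (1 + 2 / √N) ^ m := by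
  have hsqrt : 2 ≤ √N := by
    rw [le_sqrt (by norm_num) (by linarith)]; linarith
  have hexp : logb 2 N + 1 ≤ 2 / √N * m := by
    rw [div_mul_eq_mul_div, le_div_iff₀ (by linarith)]; linarith
  have hbernoulli : (2 : ℝ) ^ (2 / √N) ≤ 1 + 2 / √N := by
    simpa [one_add_one_eq_two] using rpow_one_add_le_one_add_mul_self (s := 1) (by norm_num)
      (by positivity) ((div_le_one (by linarith)).2 hsqrt)
  calc 2 * N = (2 : ℝ) ^ (logb 2 N + 1) := by
        rw [rpow_add_one (by norm_num), rpow_logb (by norm_num) (by norm_num) (by linarith),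
          mul_comm]
    _ ≤ (2 : ℝ) ^ (2 / √N * m) := rpow_le_rpow_of_exponent_le (by norm_num) hexp
    _ = ((2 : ℝ) ^ (2 / √N)) ^ m := rpow_mul_natCast (by norm_num) _ _
    _ ≤ (1 + 2 / √N) ^ m := by gcongr

theorem two_div_sqrt_le_sqrt_one_add_sq_sub_one {N : ℝ} (hN : 2 < N) :
    2 / √N ≤ √((1 + 2 / (N - 2)) ^ 2 - 1) := by
  set c := 2 / (N - 2)
  have hc : 0 ≤ c := div_nonneg (by norm_num) (by linarith)
  rw [le_sqrt (by positivity) (by nlinarith), div_pow, sq_sqrt (by linarith)]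
  have : 4 / N ≤ 2 * c := by
    rw [show 2 * c = 4 / (N - 2) by ring]; gcongr; linarith
  nlinarith

theorem le_eval_T_real_one_add {N : ℝ} (hN : 4 ≤ N) {m : ℕ}
    (hm : 1 / 2 * √N * (logb 2 N + 1) ≤ m) : N ≤ (T ℝ m).eval (1 + 2 / (N - 2)) := by
  have hx : 1 ≤ 1 + 2 / (N - 2) := by
    have : 0 ≤ 2 / (N - 2) := div_nonneg (by norm_num) (by linarith)
    linarith
  calc N = 2 * N / 2 := by ring
    _ ≤ (1 + 2 / √N) ^ m / 2 := by gcongr; exact two_mul_le_one_add_two_div_sqrt_pow hN hm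
    _ ≤ (1 + 2 / (N - 2) + √((1 + 2 / (N - 2)) ^ 2 - 1)) ^ m / 2 := by
        gcongr; exact two_div_sqrt_le_sqrt_one_add_sq_sub_one (by linarith)
    _ ≤ (T ℝ m).eval (1 + 2 / (N - 2)) := pow_div_two_le_eval_T_real m hx

theorem sum_Icc_mul_sq_neg {n : ℕ} (hn : 1 ≤ n) {f : ℝ → ℝ}
    (hbound : ∀ x ∈ Set.Icc (0 : ℝ) (n - 2), |f x| ≤ 1) (hlarge : (n : ℝ) ≤ |f (-1)|) :
    ∑ w ∈ Finset.Icc (-1 : ℤ) ((n : ℤ) - 2), (w : ℝ) * f w ^ 2 < 0 := by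
  have hsplit : Finset.Icc (-1 : ℤ) (n - 2) = insert (-1) (Finset.Icc 0 ((n : ℤ) - 2)) := by
    ext w; simp only [Finset.mem_Icc, Finset.mem_insert]; omega
  have hcard : ((Finset.Icc (0 : ℤ) (n - 2)).card : ℝ) = n - 1 := by
    have : ((Finset.Icc (0 : ℤ) (n - 2)).card : ℤ) = n - 1 := by rw [Int.card_Icc]; omega
    exact_mod_cast this
  have hterm : ∀ w ∈ Finset.Icc (0 : ℤ) (n - 2), (w : ℝ) * f w ^ 2 ≤ n - 2 := by
    intro w hw
    rw [Finset.mem_Icc] at hw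
    have hw₀ : (0 : ℝ) ≤ w := by exact_mod_cast hw.1
    have hw₁ : (w : ℝ) ≤ n - 2 := by exact_mod_cast hw.2
    have hf : f w ^ 2 ≤ 1 := by
      rw [← sq_abs, sq_le_one_iff₀ (abs_nonneg _)]; exact hbound w ⟨hw₀, hw₁⟩
    nlinarith
  have hneg : (n : ℝ) ^ 2 ≤ f (-1) ^ 2 := by
    rw [← sq_abs (f (-1))]; exact pow_le_pow_left₀ (Nat.cast_nonneg n) hlarge 2
  have hrest := Finset.sum_le_card_nsmul _ _ _ hterm
  rw [nsmul_eq_mul, hcard] at hrest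
  rw [hsplit, Finset.sum_insert (by simp)]
  push_cast
  nlinarith

noncomputable def rescaledT (m : ℕ) (L : ℝ) : ℝ[X] := (T ℝ m).comp (1 - C (2 / L) * X)

theorem natDegree_rescaledT (m : ℕ) {L : ℝ} (hL : L ≠ 0) : (rescaledT m L).natDegree = m := by
  rw [rescaledT, natDegree_comp, natDegree_T, natDegree_sub_eq_right_of_natDegree_lt] <;>
    simp [hL]

theorem abs_eval_rescaledT_le_one (m : ℕ) {L x : ℝ} (hx : x ∈ Set.Icc 0 L) :
    |(rescaledT m L).eval x| ≤ 1 := by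
  rw [rescaledT, eval_comp]
  apply abs_eval_T_real_le_one
  have h₀ : 0 ≤ x / L := div_nonneg hx.1 (hx.1.trans hx.2)
  have h₁ : x / L ≤ 1 := div_le_one_of_le₀ hx.2 (hx.1.trans hx.2)
  simp only [eval_sub, eval_one, eval_mul, eval_C, eval_X]
  rw [abs_le]; constructor <;> linarith [show 2 / L * x = 2 * (x / L) by ring]

theorem eval_rescaledT_neg_one (m : ℕ) (L : ℝ) :
    (rescaledT m L).eval (-1) = (T ℝ m).eval (1 + 2 / L) := by
  simp [rescaledT]

theorem exists_poly_negative_expectation (n : ℕ) (hn : 4 ≤ n) :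
    ∃ g : Polynomial ℝ,
      g.natDegree = ⌈(1 / 2 : ℝ) * Real.sqrt n * (Real.logb 2 n + 1)⌉₊ ∧
      ∑ w ∈ Finset.Icc (-1 : ℤ) ((n : ℤ) - 2), (w : ℝ) * (g.eval (w : ℝ)) ^ 2 < 0 := by
  set m := ⌈(1 / 2 : ℝ) * √n * (logb 2 n + 1)⌉₊
  have hn' : (4 : ℝ) ≤ n := by exact_mod_cast hn
  refine ⟨rescaledT m (n - 2), natDegree_rescaledT m (by linarith), ?_⟩
  refine sum_Icc_mul_sq_neg (f := fun x => (rescaledT m (n - 2)).eval x) (by omega)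
    (fun x hx => abs_eval_rescaledT_le_one m hx) ?_
  have hlarge := le_eval_T_real_one_add hn' (Nat.le_ceil _ : _ ≤ (m : ℝ))
  rw [← eval_rescaledT_neg_one] at hlarge
  exact hlarge.trans (le_abs_self _)
end

section
/- Let h_k(x) = (1/√(k!·(k+1)!)) · Σ_{j=0}^k (-1)^(k-j) · binomial(k,j) · ((k+1)!/(j+1)!) · x^j. Then for all k ∈ ℕ and all real x, |h_k(x)| ≤ √(k+1) · e^(k·|x|). -/
/-!
Since `C(k,j) ≤ k^j` and `(k+1)!/(j+1)! ≤ (k+1)!/j!`, the `j`-th term of the sum is at most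
`(k+1)! (k|x|)^j / j!`, so the whole sum is at most `(k+1)! e^{k|x|}`. The normalisation then
contributes `(k+1)! / √(k! (k+1)!) = √(k+1)`.
-/

noncomputable def h (k : ℕ) (x : ℝ) : ℝ :=
  (1 / Real.sqrt ((Nat.factorial k : ℝ) * (Nat.factorial (k + 1) : ℝ))) *
    ∑ j ∈ Finset.range (k + 1),
      (-1 : ℝ) ^ (k - j) * (Nat.choose k j : ℝ) *
        ((Nat.factorial (k + 1) : ℝ) / (Nat.factorial (j + 1) : ℝ)) * x ^ j

open Finset Real Nat

lemma factorial_succ_div_sqrt_factorial_mul (k : ℕ) :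
    ((k + 1)! : ℝ) / √((k ! : ℝ) * (k + 1)!) = √(k + 1) := by
  have hk : ((k + 1)! : ℝ) = (k + 1) * k ! := by push_cast [factorial_succ]; ring
  rw [div_eq_iff (by positivity), ← sqrt_mul (by positivity), hk,
    show ((k : ℝ) + 1) * (k ! * ((k + 1) * k !)) = ((k + 1) * k !) ^ 2 by ring,
    sqrt_sq (by positivity)]

lemma abs_h_term_le (k j : ℕ) (x : ℝ) :
    |(-1 : ℝ) ^ (k - j) * (k.choose j : ℝ) * (((k + 1)! : ℝ) / (j + 1)!) * x ^ j|
      ≤ (k + 1)! * ((k * |x|) ^ j / j !) := by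
  rw [abs_mul, abs_mul, abs_mul, abs_pow, abs_neg, abs_one, one_pow, one_mul, Nat.abs_cast,
    abs_div, Nat.abs_cast, Nat.abs_cast, abs_pow]
  calc (k.choose j : ℝ) * (((k + 1)! : ℝ) / (j + 1)!) * |x| ^ j
      ≤ (k : ℝ) ^ j * (((k + 1)! : ℝ) / j !) * |x| ^ j := by
        gcongr
        · exact_mod_cast choose_le_pow k j
        · exact le_succ j
    _ = (k + 1)! * ((k * |x|) ^ j / j !) := by ring

lemma abs_h_sum_le (k : ℕ) (x : ℝ) :
    |∑ j ∈ range (k + 1),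
        (-1 : ℝ) ^ (k - j) * (k.choose j : ℝ) * (((k + 1)! : ℝ) / (j + 1)!) * x ^ j|
      ≤ (k + 1)! * exp (k * |x|) :=
  calc _ ≤ ∑ j ∈ range (k + 1), ((k + 1)! : ℝ) * ((k * |x|) ^ j / j !) :=
        (abs_sum_le_sum_abs _ _).trans (sum_le_sum fun j _ => abs_h_term_le k j x)
    _ = (k + 1)! * ∑ j ∈ range (k + 1), ((k : ℝ) * |x|) ^ j / j ! := (mul_sum _ _ _).symm
    _ ≤ (k + 1)! * exp (k * |x|) := by
        gcongr
        exact sum_le_exp_of_nonneg (by positivity) (k + 1)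

theorem h_abs_bound (k : ℕ) (x : ℝ) :
    |h k x| ≤ Real.sqrt (k + 1) * Real.exp (k * |x|) := by
  rw [h, abs_mul, abs_of_nonneg (by positivity), ← factorial_succ_div_sqrt_factorial_mul]
  calc _ ≤ 1 / √((k ! : ℝ) * (k + 1)!) * ((k + 1)! * exp (k * |x|)) := by
        gcongr
        exact abs_h_sum_le k x
    _ = _ := by ring
end

section
/- Let h_k(x) = (1/√(k!·(k+1)!)) · Σ_{j=0}^k (-1)^(k-j) · binomial(k,j) · ((k+1)!/(j+1)!) · x^j. The derivative satisfies h_k'(x) = Σ_{k'=0}^{k-1} (-1)^(k-1-k') · (k!/k'!) · (√(k'!·(k'+1)!)/√(k!·(k+1)!)) · h_{k'}(x). -/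
open Polynomial Finset
open scoped Nat

theorem Nat.sum_range_succ_choose_succ (k j : ℕ) :
    ∑ i ∈ range k, (i + 1).choose (j + 1) = (k + 1).choose (j + 2) := by
  induction k with
  | zero => simp [Nat.choose_eq_zero_of_lt]
  | succ k ih => rw [sum_range_succ, ih, Nat.choose_succ_succ' (k + 1) (j + 1), add_comm]

namespace Polynomial

variable (R : Type*) [Field R]

/-- The generalized Laguerre polynomial `L_k^{(1)}`. -/
noncomputable def laguerreOne (k : ℕ) : R[X] :=
  ∑ j ∈ range (k + 1), C ((-1) ^ j * (k + 1).choose (j + 1) / (j ! : R)) * X ^ j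

theorem coeff_laguerreOne (k j : ℕ) :
    (laguerreOne R k).coeff j = (-1) ^ j * (k + 1).choose (j + 1) / (j ! : R) := by
  simp only [laguerreOne, finsetSum_coeff, coeff_C_mul_X_pow, sum_ite_eq, mem_range]
  split_ifs with hj
  · rfl
  · rw [Nat.choose_eq_zero_of_lt (by omega)]; simp

theorem eval_laguerreOne (k : ℕ) (x : R) :
    (laguerreOne R k).eval x =
      ∑ j ∈ range (k + 1), (-1) ^ j * (k + 1).choose (j + 1) / (j ! : R) * x ^ j := by
  simp [laguerreOne, eval_finsetSum]

theorem derivative_laguerreOne [CharZero R] (k : ℕ) :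
    derivative (laguerreOne R k) = -∑ i ∈ range k, laguerreOne R i := by
  ext j
  have hfact : ((j + 1)! : R) = (j + 1) * j ! := by push_cast [Nat.factorial_succ]; ring
  have hj : (j + 1 : R) ≠ 0 := by exact_mod_cast j.succ_ne_zero
  simp only [coeff_derivative, coeff_neg, finsetSum_coeff, coeff_laguerreOne, ← sum_div,
    ← mul_sum, ← Nat.cast_sum, Nat.sum_range_succ_choose_succ, hfact]
  field_simp
  ring

end Polynomial

theorem neg_one_pow_sub_of_le {R : Type*} [Ring R] {m n : ℕ} (hmn : m ≤ n) :
    (-1 : R) ^ (n - m) = (-1) ^ n * (-1) ^ m := by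
  rw [← pow_sub_mul_pow (-1 : R) hmn, mul_assoc, ← pow_add, Even.neg_one_pow ⟨m, rfl⟩,
    mul_one]

theorem Nat.choose_mul_factorial_succ_mul_factorial (k j : ℕ) :
    k.choose j * (k + 1)! * j ! = k ! * (k + 1).choose (j + 1) * (j + 1)! := by
  calc k.choose j * (k + 1)! * j ! = (k + 1) * k.choose j * k ! * j ! := by
        rw [Nat.factorial_succ]; ring
    _ = (k + 1).choose (j + 1) * (j + 1) * k ! * j ! := by rw [Nat.add_one_mul_choose_eq]
    _ = k ! * (k + 1).choose (j + 1) * (j + 1)! := by rw [Nat.factorial_succ j]; ring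

theorem h_eq_eval_laguerreOne (k : ℕ) (x : ℝ) :
    h k x = (-1) ^ k * k ! / √(k ! * (k + 1)!) * (laguerreOne ℝ k).eval x := by
  rw [h, eval_laguerreOne, mul_sum, mul_sum]
  refine sum_congr rfl fun j hj => ?_
  have hcoeff : (k.choose j : ℝ) * (k + 1)! * j ! = k ! * (k + 1).choose (j + 1) * (j + 1)! := by
    exact_mod_cast Nat.choose_mul_factorial_succ_mul_factorial k j
  rw [neg_one_pow_sub_of_le (Nat.lt_succ_iff.mp (mem_range.mp hj))]
  field_simp
  linear_combination x ^ j * hcoeff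

theorem h_deriv (k : ℕ) (x : ℝ) :
    deriv (h k) x =
      ∑ k' ∈ Finset.range k,
        (-1 : ℝ) ^ (k - 1 - k') * ((Nat.factorial k : ℝ) / (Nat.factorial k' : ℝ)) *
          (Real.sqrt ((Nat.factorial k' : ℝ) * (Nat.factorial (k' + 1) : ℝ)) /
            Real.sqrt ((Nat.factorial k : ℝ) * (Nat.factorial (k + 1) : ℝ))) * h k' x := by
  rw [show h k = _ from funext (h_eq_eval_laguerreOne k),
    (((laguerreOne ℝ k).hasDerivAt x).const_mul _).deriv, derivative_laguerreOne, eval_neg,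
    eval_finsetSum, mul_neg, mul_sum, ← sum_neg_distrib]
  refine sum_congr rfl fun i hi => ?_
  rw [h_eq_eval_laguerreOne, show k - 1 - i = k - (i + 1) by omega,
    neg_one_pow_sub_of_le (mem_range.mp hi), pow_succ]
  field_simp
  simp [← pow_mul]
end

section
/- Let h_j(x) = (1/√(j!·(j+1)!)) · Σ_{i=0}^j (-1)^(j-i) · binomial(j,i) · ((j+1)!/(i+1)!) · x^i. Then for all j ∈ ℕ, ∫₀^∞ h_j(x)² · e^(-x) dx ≤ j + 8. -/
/-!
The integral is in fact exactly `1`. Write `c_i = laguerreCoeff j i`. Expanding the square and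
integrating the monomials, `∫ x^n e^{-x} = n!`, reduces it to `∑ a, ∑ i, c_a c_i (a + i)!`.
For `1 ≤ a ≤ j` the inner sum is `(j + 1)!` times the `j`-th forward difference at `0` of the
polynomial `i ↦ (i + 2) ⋯ (i + a)` of degree `a - 1 < j`, so it vanishes; only the row `a = 0`
survives, and it equals `c_0 (-1)^j j! = j! (j + 1)!`.
-/
open Finset MeasureTheory Polynomial Real Set
open scoped Nat

lemma integrableOn_pow_mul_exp_neg_Ioi (n : ℕ) :
    IntegrableOn (fun x : ℝ ↦ x ^ n * exp (-x)) (Ioi 0) := by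
  refine (GammaIntegral_convergent n.cast_add_one_pos).congr_fun (fun x _ ↦ ?_) measurableSet_Ioi
  simp [mul_comm]

lemma integral_pow_mul_exp_neg_Ioi (n : ℕ) :
    ∫ x in Ioi (0 : ℝ), x ^ n * exp (-x) = n ! := by
  rw [← Gamma_nat_eq_factorial, Gamma_eq_integral n.cast_add_one_pos]
  refine setIntegral_congr_fun measurableSet_Ioi (fun x _ ↦ ?_)
  simp [mul_comm]

lemma integral_sum_mul_sum_pow_mul_exp_neg_Ioi (s t : Finset ℕ) (c d : ℕ → ℝ) :
    ∫ x in Ioi (0 : ℝ), (∑ i ∈ s, c i * x ^ i) * (∑ k ∈ t, d k * x ^ k) * exp (-x)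
      = ∑ i ∈ s, ∑ k ∈ t, c i * d k * (i + k)! := by
  have hexpand : ∀ x : ℝ, (∑ i ∈ s, c i * x ^ i) * (∑ k ∈ t, d k * x ^ k) * exp (-x)
      = ∑ i ∈ s, ∑ k ∈ t, c i * d k * (x ^ (i + k) * exp (-x)) := fun x ↦ by
    rw [sum_mul_sum, sum_mul]
    refine sum_congr rfl fun i _ ↦ ?_
    rw [sum_mul]
    exact sum_congr rfl fun k _ ↦ by ring
  have hint : ∀ i k, IntegrableOn (fun x : ℝ ↦ c i * d k * (x ^ (i + k) * exp (-x))) (Ioi 0) :=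
    fun i k ↦ (integrableOn_pow_mul_exp_neg_Ioi (i + k)).const_mul _
  simp_rw [hexpand]
  rw [integral_finsetSum _ fun i _ ↦ integrable_finsetSum _ fun k _ ↦ hint i k]
  refine sum_congr rfl fun i _ ↦ ?_
  rw [integral_finsetSum _ fun k _ ↦ hint i k]
  simp_rw [integral_const_mul, integral_pow_mul_exp_neg_Ioi]

lemma sum_neg_one_pow_mul_choose_mul_eval_eq_zero {R : Type*} [CommRing R] {P : R[X]} {n : ℕ}
    (hP : P.natDegree < n) :
    ∑ k ∈ range (n + 1), (-1) ^ (n - k) * n.choose k * P.eval (k : R) = 0 := by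
  have := congrFun (fwdDiff_iter_eq_zero_of_degree_lt hP) 0
  rw [fwdDiff_iter_eq_sum_shift] at this
  simpa [zsmul_eq_mul] using this

lemma factorial_add_eq_factorial_mul_ascPochhammer (a i : ℕ) (ha : 1 ≤ a) :
    ((a + i)! : ℝ) = (i + 1)! * (ascPochhammer ℝ (a - 1)).eval ((i : ℝ) + 2) := by
  have := Nat.factorial_mul_ascFactorial (i + 1) (a - 1)
  rw [show i + 1 + (a - 1) = a + i by omega] at this
  rw [← this, show (i : ℝ) + 2 = ((i + 2 : ℕ) : ℝ) by push_cast; ring,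
    ascPochhammer_nat_eq_natCast_ascFactorial]
  push_cast
  rfl

/-- The coefficient of `x ^ i` in `(-1) ^ j * j ! * L_j^{(1)}(x)`. -/
noncomputable def laguerreCoeff (j i : ℕ) : ℝ :=
  (-1) ^ (j - i) * j.choose i * ((j + 1)! / (i + 1)!)

lemma h_eq (j : ℕ) (x : ℝ) :
    h j x = 1 / √(j ! * (j + 1)!) * ∑ i ∈ range (j + 1), laguerreCoeff j i * x ^ i := rfl

lemma laguerreCoeff_zero (j : ℕ) : laguerreCoeff j 0 = (-1) ^ j * (j + 1)! := by
  simp [laguerreCoeff]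

lemma sum_laguerreCoeff_mul_factorial_add {j a : ℕ} (ha : 1 ≤ a) (haj : a ≤ j) :
    ∑ i ∈ range (j + 1), laguerreCoeff j i * (a + i)! = 0 := by
  set P : ℝ[X] := (ascPochhammer ℝ (a - 1)).comp (X + C 2)
  have hP : P.natDegree < j := by
    simp only [P, natDegree_comp, ascPochhammer_natDegree, natDegree_X_add_C]
    omega
  calc ∑ i ∈ range (j + 1), laguerreCoeff j i * (a + i)!
      = (j + 1)! * ∑ i ∈ range (j + 1), (-1) ^ (j - i) * j.choose i * P.eval (i : ℝ) := by
        rw [mul_sum]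
        refine sum_congr rfl fun i _ ↦ ?_
        rw [factorial_add_eq_factorial_mul_ascPochhammer a i ha]
        simp only [laguerreCoeff, P, eval_comp, eval_add, eval_X, eval_C]
        field_simp
    _ = 0 := by rw [sum_neg_one_pow_mul_choose_mul_eval_eq_zero hP, mul_zero]

lemma sum_laguerreCoeff_mul_factorial (j : ℕ) :
    ∑ i ∈ range (j + 1), laguerreCoeff j i * i ! = (-1) ^ j * j ! := by
  have halt := sum_neg_one_pow_mul_choose_mul_eval_eq_zero (P := C (1 : ℝ)) (n := j + 1)
    (by simp)
  rw [sum_range_succ'] at halt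
  simp only [eval_C, mul_one, Nat.add_sub_add_right, Nat.choose_zero_right, Nat.cast_one,
    Nat.sub_zero, CharP.cast_eq_zero] at halt
  have hterm : ∀ i, laguerreCoeff j i * i ! = j ! * ((-1) ^ (j - i) * (j + 1).choose (i + 1)) := by
    intro i
    have hchoose : ((j + 1 : ℕ) : ℝ) * j.choose i = (j + 1).choose (i + 1) * (i + 1 : ℕ) := by
      exact_mod_cast Nat.add_one_mul_choose_eq j i
    simp only [laguerreCoeff, Nat.factorial_succ]
    push_cast at hchoose ⊢
    field_simp
    linear_combination hchoose
  simp_rw [hterm, ← mul_sum]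
  rw [eq_neg_of_add_eq_zero_left halt]
  ring

lemma integral_h_sq_mul_exp_neg (j : ℕ) :
    ∫ x in Ioi (0 : ℝ), h j x ^ 2 * exp (-x) = 1 := by
  set M : ℝ := j ! * (j + 1)!
  have hM : 0 < M := by positivity
  have hsq : ∀ x, h j x ^ 2 * exp (-x)
      = M⁻¹ * ((∑ i ∈ range (j + 1), laguerreCoeff j i * x ^ i) *
          (∑ k ∈ range (j + 1), laguerreCoeff j k * x ^ k) * exp (-x)) :=
    fun x ↦ by rw [h_eq, mul_pow, div_pow, sq_sqrt hM.le]; ring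
  have horth : ∀ a ∈ range (j + 1), a ≠ 0 →
      ∑ k ∈ range (j + 1), laguerreCoeff j a * laguerreCoeff j k * (a + k)! = 0 :=
    fun a ha ha0 ↦ by
      simp_rw [mul_assoc, ← mul_sum]
      rw [sum_laguerreCoeff_mul_factorial_add (Nat.one_le_iff_ne_zero.mpr ha0)
        (Nat.lt_succ_iff.mp (mem_range.mp ha)), mul_zero]
  calc ∫ x in Ioi (0 : ℝ), h j x ^ 2 * exp (-x)
      = M⁻¹ * ∑ i ∈ range (j + 1), ∑ k ∈ range (j + 1),
          laguerreCoeff j i * laguerreCoeff j k * (i + k)! := by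
        simp_rw [hsq]
        rw [integral_const_mul, integral_sum_mul_sum_pow_mul_exp_neg_Ioi]
    _ = M⁻¹ * (laguerreCoeff j 0 * ∑ k ∈ range (j + 1), laguerreCoeff j k * k !) := by
        congr 1
        rw [sum_eq_single 0 horth (by simp), mul_sum]
        simp_rw [zero_add, mul_assoc]
    _ = 1 := by
        rw [laguerreCoeff_zero, sum_laguerreCoeff_mul_factorial, mul_mul_mul_comm, ← pow_add,
          ← two_mul, pow_mul, neg_one_sq, one_pow, one_mul, mul_comm ((j + 1)! : ℝ)]
        exact inv_mul_cancel₀ hM.ne'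

theorem h_sq_integral_no_x_bound (j : ℕ) :
    (∫ x in Set.Ioi (0 : ℝ), (h j x) ^ 2 * Real.exp (-x)) ≤ (j : ℝ) + 8 := by
  rw [integral_h_sq_mul_exp_neg]
  linarith [(j.cast_nonneg : (0 : ℝ) ≤ j)]
end

section
/- For all natural numbers k with k ≥ 1 and all real x ≥ 1, |h_k(x)| ≤ (2x)^k, where h_k(x) = (1/√(k!·(k+1)!)) · Σ_{j=0}^k (-1)^(k-j) · binomial(k,j) · ((k+1)!/(j+1)!) · x^j. -/
open Finset Nat

/-- The generalized Laguerre polynomial `L_k^{(1)}`, orthogonal for the weight `x e^{-x}`. -/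
noncomputable def laguerreOne (k : ℕ) (x : ℝ) : ℝ :=
  ∑ j ∈ range (k + 1), (-1) ^ j * ((k + 1).choose (j + 1) : ℝ) * x ^ j / j !

theorem neg_one_pow_sub_eq {R : Type*} [Monoid R] [HasDistribNeg R] {j k : ℕ} (hjk : j ≤ k) :
    (-1 : R) ^ (k - j) = (-1) ^ k * (-1) ^ j := by
  conv_rhs => rw [← Nat.sub_add_cancel hjk, pow_add, mul_assoc, ← pow_add, ← two_mul, pow_mul]
  simp

theorem choose_mul_factorial_succ_div (k j : ℕ) :
    (k.choose j : ℝ) * ((k + 1)! / (j + 1)!) = k ! * (k + 1).choose (j + 1) / j ! := by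
  have := congrArg (Nat.cast (R := ℝ)) (add_one_mul_choose_eq k j)
  push_cast at this
  rw [factorial_succ k, factorial_succ j]
  push_cast
  field_simp
  linear_combination this

theorem sqrt_factorial_mul_factorial_succ (k : ℕ) :
    √((k ! : ℝ) * (k + 1)!) = k ! * √(k + 1) := by
  rw [factorial_succ, cast_mul, ← mul_assoc, mul_comm, ← mul_assoc, Real.sqrt_mul (by positivity),
    Real.sqrt_mul_self (by positivity)]
  push_cast
  ring

theorem h_eq_laguerreOne (k : ℕ) (x : ℝ) :
    h k x = (-1) ^ k / √(k + 1) * laguerreOne k x := by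
  rw [h, laguerreOne, sqrt_factorial_mul_factorial_succ, mul_sum, mul_sum]
  refine sum_congr rfl fun j hj => ?_
  rw [neg_one_pow_sub_eq (Nat.lt_succ_iff.mp (mem_range.mp hj)), mul_assoc _ (k.choose j : ℝ),
    choose_mul_factorial_succ_div]
  field_simp

theorem abs_h_eq (k : ℕ) (x : ℝ) : |h k x| = |laguerreOne k x| / √(k + 1) := by
  rw [h_eq_laguerreOne, abs_mul, abs_div, abs_pow, abs_neg, abs_one, one_pow,
    abs_of_pos (by positivity : 0 < √((k : ℝ) + 1))]
  ring

theorem sum_range_choose_succ_le (n : ℕ) :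
    ∑ j ∈ range n, (n.choose (j + 1) : ℝ) ≤ 2 ^ n := by
  have hsum := Nat.sum_range_choose n
  rw [sum_range_succ'] at hsum
  exact_mod_cast (le_self_add.trans hsum.le : ∑ j ∈ range n, n.choose (j + 1) ≤ 2 ^ n)

theorem laguerreOne_zero (x : ℝ) : laguerreOne 0 x = 1 := by
  simp [laguerreOne]

theorem laguerreOne_one (x : ℝ) : laguerreOne 1 x = 2 - x := by
  norm_num [laguerreOne, sum_range_succ]
  ring

theorem laguerreOne_two (x : ℝ) : laguerreOne 2 x = 3 - 3 * x + x ^ 2 / 2 := by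
  norm_num [laguerreOne, sum_range_succ, Nat.choose]
  ring

theorem abs_laguerreOne_le {x : ℝ} (hx : 1 ≤ x) (k : ℕ) :
    |laguerreOne k x| ≤ 2 ^ (k + 1) * x ^ k := by
  have term_le : ∀ j ∈ range (k + 1),
      |(-1) ^ j * ((k + 1).choose (j + 1) : ℝ) * x ^ j / j !| ≤ (k + 1).choose (j + 1) * x ^ k := by
    intro j hj
    rw [abs_div, abs_mul, abs_mul, abs_pow, abs_neg, abs_one, one_pow, one_mul, Nat.abs_cast,
      Nat.abs_cast, abs_of_nonneg (by positivity)]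
    calc (k + 1).choose (j + 1) * x ^ j / j ! ≤ (k + 1).choose (j + 1) * x ^ j :=
          div_le_self (by positivity) (by exact_mod_cast j.factorial_pos)
      _ ≤ (k + 1).choose (j + 1) * x ^ k :=
          mul_le_mul_of_nonneg_left (pow_le_pow_right₀ hx (mem_range_succ_iff.mp hj))
            (by positivity)
  calc |laguerreOne k x| ≤ ∑ j ∈ range (k + 1), ((k + 1).choose (j + 1) : ℝ) * x ^ k :=
        (abs_sum_le_sum_abs _ _).trans (sum_le_sum term_le)
    _ ≤ 2 ^ (k + 1) * x ^ k := by
        rw [← sum_mul]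
        exact mul_le_mul_of_nonneg_right (sum_range_choose_succ_le _) (by positivity)

theorem h_bound_large_x_general (k : ℕ) (x : ℝ) (hx : 1 ≤ x) :
    |h k x| ≤ (2 * x) ^ k := by
  rw [abs_h_eq]
  rcases lt_or_ge k 3 with hk | hk
  · have hsqrt : 1 ≤ √((k : ℝ) + 1) := Real.one_le_sqrt.mpr (by linarith [k.cast_nonneg (α := ℝ)])
    refine (div_le_self (abs_nonneg _) hsqrt).trans ?_
    interval_cases k
    · simp [laguerreOne_zero]
    · rw [laguerreOne_one, abs_le]
      constructor <;> linarith
    · rw [laguerreOne_two, abs_le]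
      constructor <;> nlinarith
  · have hsqrt : 2 ≤ √((k : ℝ) + 1) := by
      rw [Real.le_sqrt zero_le_two (by positivity)]
      norm_num
      exact_mod_cast (by omega : 4 ≤ k + 1)
    calc |laguerreOne k x| / √(k + 1) ≤ 2 ^ (k + 1) * x ^ k / 2 :=
          div_le_div₀ (by positivity) (abs_laguerreOne_le hx k) two_pos hsqrt
      _ = (2 * x) ^ k := by ring

theorem h_bound_large_x (k : ℕ) (hk : 1 ≤ k) (x : ℝ) (hx : 1 ≤ x) :
    |h k x| ≤ (2 * x) ^ k :=
  h_bound_large_x_general k x hx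
end

section
/- For all d ∈ ℕ, if g is a real polynomial of degree at most d, then for all real y ≥ 1, g(y)² ≤ 2·(2y)^(2d)·∫₀^∞ g(x)²·x·e^(-x) dx. -/
/-!
The generalized Laguerre polynomials `L_n = L_n^{(1)}` are orthogonal for the weight `x e^{-x}` on
`(0, ∞)`, with `∫ L_m L_n x e^{-x} = (n + 1) δ_{mn}`. Since `∫ x^k · x e^{-x} = (k + 1)!`, the
pairing of `x^k` with `L_n` is an alternating binomial sum of values of the rising factorial
`(j + 1) ⋯ (j + k + 1)`, i.e. an `(n + 1)`-st forward difference of a polynomial of degree `k + 1`;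
it vanishes for `k < n`. Expanding `g = ∑_{n ≤ d} c_n L_n`, Cauchy–Schwarz gives
`g(y)² ≤ (∫ g² x e^{-x}) · ∑_{n ≤ d} L_n(y)² / (n + 1)`, and the crude bound
`|L_n(y)| ≤ (2^{n+1} - 1) y^n` for `y ≥ 1` makes the last sum at most `2 (2y)^{2d}`.
-/

open MeasureTheory Finset Polynomial Real
open scoped Nat

lemma integral_pow_mul_exp_neg (k : ℕ) :
    ∫ x in Set.Ioi (0 : ℝ), x ^ k * exp (-x) = k ! := by
  rw [← Gamma_nat_eq_factorial, Gamma_eq_integral (by positivity)]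
  refine setIntegral_congr_fun measurableSet_Ioi fun x _ => ?_
  rw [add_sub_cancel_right, rpow_natCast, mul_comm]

lemma integrableOn_pow_mul_exp_neg (k : ℕ) :
    IntegrableOn (fun x : ℝ => x ^ k * exp (-x)) (Set.Ioi 0) := by
  refine (GammaIntegral_convergent (s := k + 1) (by positivity)).congr_fun
    (fun x _ => ?_) measurableSet_Ioi
  simp only [add_sub_cancel_right, rpow_natCast, mul_comm]

lemma integrableOn_eval_mul_mul_exp_neg (p : ℝ[X]) :
    IntegrableOn (fun x => p.eval x * (x * exp (-x))) (Set.Ioi 0) := by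
  induction p using Polynomial.induction_on' with
  | add p q hp hq =>
    simp only [eval_add, add_mul]
    exact hp.add hq
  | monomial k a =>
    refine IntegrableOn.congr_fun ((integrableOn_pow_mul_exp_neg (k + 1)).const_mul a)
      (fun x _ => ?_) measurableSet_Ioi
    simp only [eval_monomial]
    ring

noncomputable def weightedIntegral : ℝ[X] →ₗ[ℝ] ℝ where
  toFun p := ∫ x in Set.Ioi 0, p.eval x * (x * exp (-x))
  map_add' p q := by
    simp only [eval_add, add_mul]
    exact integral_add (integrableOn_eval_mul_mul_exp_neg p) (integrableOn_eval_mul_mul_exp_neg q)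
  map_smul' c p := by
    simp only [eval_smul, smul_eq_mul, mul_assoc, integral_const_mul, RingHom.id_apply]

lemma weightedIntegral_apply (p : ℝ[X]) :
    weightedIntegral p = ∫ x in Set.Ioi 0, p.eval x * (x * exp (-x)) := rfl

lemma weightedIntegral_X_pow (k : ℕ) : weightedIntegral (X ^ k) = (k + 1)! := by
  rw [weightedIntegral_apply, ← integral_pow_mul_exp_neg]
  refine setIntegral_congr_fun measurableSet_Ioi fun x _ => ?_
  simp only [eval_pow, eval_X]
  ring

lemma weightedIntegral_sq_nonneg (p : ℝ[X]) : 0 ≤ weightedIntegral (p ^ 2) :=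
  setIntegral_nonneg measurableSet_Ioi fun x (hx : 0 < x) => by
    simp only [eval_pow]
    positivity

/-- The generalized Laguerre polynomial `L_n^{(1)}`. -/
noncomputable def laguerre (n : ℕ) : ℝ[X] :=
  ∑ k ∈ range (n + 1), C ((-1 : ℝ) ^ k * (n + 1).choose (k + 1) / k !) * X ^ k

lemma coeff_laguerre (n k : ℕ) :
    (laguerre n).coeff k = (-1) ^ k * (n + 1).choose (k + 1) / k ! := by
  rw [laguerre, finsetSum_coeff]
  simp only [coeff_C_mul_X_pow]
  rw [sum_ite_eq]
  split_ifs with hk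
  · rfl
  · rw [Finset.mem_range] at hk
    rw [Nat.choose_eq_zero_of_lt (by omega)]
    simp

lemma natDegree_laguerre_le (n : ℕ) : (laguerre n).natDegree ≤ n :=
  natDegree_le_iff_coeff_eq_zero.mpr fun k hk => by
    rw [coeff_laguerre, Nat.choose_eq_zero_of_lt (by omega)]
    simp

lemma degree_laguerre (n : ℕ) : (laguerre n).degree = n :=
  degree_eq_of_le_of_coeff_ne_zero (degree_le_of_natDegree_le (natDegree_laguerre_le n))
    (by rw [coeff_laguerre]; simp [Nat.factorial_ne_zero])

lemma sum_neg_one_pow_mul_choose_succ_mul {R : Type*} [CommRing R] {f : R → R} (hf : f 0 = 0)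
    (n : ℕ) :
    ∑ j ∈ range (n + 1), (-1) ^ j * (n + 1).choose (j + 1) * f (j + 1) =
      (-1) ^ n * (fwdDiff 1)^[n + 1] f 0 := by
  rw [fwdDiff_iter_eq_sum_shift, sum_range_succ' _ (n + 1), zero_smul, zero_add, hf, smul_zero,
    add_zero, mul_sum]
  refine sum_congr rfl fun j hj => ?_
  obtain ⟨m, rfl⟩ := Nat.exists_eq_add_of_le (Nat.lt_succ_iff.mp (mem_range.mp hj))
  have hm : ((-1 : R) ^ m) * (-1) ^ m = 1 := by rw [← mul_pow, neg_one_mul, neg_neg, one_pow]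
  rw [zsmul_eq_mul, show j + m + 1 - (j + 1) = m by omega, zero_add, nsmul_one, pow_add]
  push_cast
  linear_combination -(-1) ^ j * ((j + m + 1).choose (j + 1) : R) * f (j + 1) * hm

lemma weightedIntegral_X_pow_mul_laguerre (k n : ℕ) :
    weightedIntegral (X ^ k * laguerre n) =
      (-1) ^ n * (fwdDiff 1)^[n + 1] (ascPochhammer ℝ (k + 1)).eval 0 := by
  rw [← sum_neg_one_pow_mul_choose_succ_mul (by simp), laguerre, mul_sum, map_sum]
  refine sum_congr rfl fun j _ => ?_
  have hfact : ((k + j + 1)! : ℝ) = j ! * (ascPochhammer ℝ (k + 1)).eval ((j + 1 : ℕ) : ℝ) := by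
    rw [ascPochhammer_nat_eq_natCast_ascFactorial, ← Nat.cast_mul, Nat.factorial_mul_ascFactorial,
      add_comm j, add_right_comm]
  rw [mul_left_comm, C_mul', map_smul, ← pow_add, weightedIntegral_X_pow, hfact, smul_eq_mul]
  push_cast
  field_simp

lemma weightedIntegral_X_pow_mul_laguerre_of_lt {k n : ℕ} (hk : k < n) :
    weightedIntegral (X ^ k * laguerre n) = 0 := by
  rw [weightedIntegral_X_pow_mul_laguerre, fwdDiff_iter_eq_zero_of_degree_lt (by
    rw [ascPochhammer_natDegree]; omega)]
  simp

lemma weightedIntegral_X_pow_mul_laguerre_self (n : ℕ) :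
    weightedIntegral (X ^ n * laguerre n) = (-1) ^ n * (n + 1)! := by
  have h := fwdDiff_iter_degree_eq_factorial (ascPochhammer ℝ (n + 1))
  rw [ascPochhammer_natDegree, (monic_ascPochhammer ℝ (n + 1)).leadingCoeff, one_smul] at h
  rw [weightedIntegral_X_pow_mul_laguerre, h]
  simp

lemma weightedIntegral_mul_laguerre {p : ℝ[X]} {n : ℕ} (hp : p.natDegree ≤ n) :
    weightedIntegral (p * laguerre n) = (-1) ^ n * (n + 1)! * p.coeff n := by
  have hp' : p = ∑ i ∈ range (n + 1), C (p.coeff i) * X ^ i := by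
    simpa only [C_mul_X_pow_eq_monomial] using p.as_sum_range' (n + 1) (by omega)
  conv_lhs => rw [hp']
  simp only [sum_mul, map_sum, C_mul', smul_mul_assoc, map_smul, smul_eq_mul]
  rw [sum_eq_single_of_mem n (self_mem_range_succ n) fun i hi hin => by
    rw [weightedIntegral_X_pow_mul_laguerre_of_lt (by grind), mul_zero],
    weightedIntegral_X_pow_mul_laguerre_self, mul_comm]

lemma weightedIntegral_laguerre_mul_laguerre (m n : ℕ) :
    weightedIntegral (laguerre m * laguerre n) = if m = n then (n + 1 : ℝ) else 0 := by
  wlog h : m ≤ n generalizing m n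
  · rw [mul_comm, this n m (by omega)]
    split_ifs <;> grind
  rw [weightedIntegral_mul_laguerre ((natDegree_laguerre_le m).trans h), coeff_laguerre]
  rcases h.eq_or_lt with rfl | hlt
  · rw [if_pos rfl, Nat.choose_self, Nat.factorial_succ]
    push_cast
    field_simp
    rw [← pow_mul, mul_comm, pow_mul, neg_one_sq, one_pow]
  · rw [Nat.choose_eq_zero_of_lt (by omega), if_neg hlt.ne]
    simp

lemma exists_sum_smul_laguerre_eq {g : ℝ[X]} {d : ℕ} (hg : g.natDegree ≤ d) :
    ∃ c : ℕ → ℝ, ∑ n ∈ range (d + 1), c n • laguerre n = g := by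
  let S : Sequence ℝ := ⟨laguerre, degree_laguerre⟩
  have hg' : g ∈ degreeLE ℝ d := mem_degreeLE.mpr (degree_le_of_natDegree_le hg)
  rwa [← S.span_degreeLE fun i _ => (leadingCoeff_ne_zero.mpr (S.ne_zero i)).isUnit,
    show Set.Iic d = ↑(range (d + 1)) by ext; simp,
    Submodule.mem_span_image_finset_iff_exists_fun'] at hg'

lemma sq_eval_sum_le_of_orthogonal {ι : Type*} [DecidableEq ι] {Φ : ℝ[X] →ₗ[ℝ] ℝ}
    {P : ι → ℝ[X]} {w : ι → ℝ} {s : Finset ι} (hw : ∀ i ∈ s, 0 < w i)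
    (horth : ∀ i ∈ s, ∀ j ∈ s, Φ (P i * P j) = if i = j then w j else 0) (c : ι → ℝ) (y : ℝ) :
    ((∑ i ∈ s, c i • P i).eval y) ^ 2 ≤
      Φ ((∑ i ∈ s, c i • P i) ^ 2) * ∑ i ∈ s, (P i).eval y ^ 2 / w i := by
  have parseval : Φ ((∑ i ∈ s, c i • P i) ^ 2) = ∑ i ∈ s, c i ^ 2 * w i := by
    rw [sq, sum_mul_sum, map_sum]
    refine sum_congr rfl fun i hi => ?_
    simp only [map_sum, smul_mul_smul_comm, map_smul, smul_eq_mul]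
    rw [sum_congr rfl fun j hj => by rw [horth i hi j hj], sum_eq_single_of_mem i hi
      fun j _ hji => by rw [if_neg hji.symm, mul_zero], if_pos rfl, sq]
  rw [parseval, eval_finsetSum]
  simp only [eval_smul, smul_eq_mul]
  refine sum_sq_le_sum_mul_sum_of_sq_le_mul s (fun i hi => ?_) (fun i hi => ?_) fun i hi => ?_
  · have := hw i hi
    positivity
  · have := hw i hi
    positivity
  · have := (hw i hi).ne'
    exact le_of_eq (by field_simp)

lemma sum_range_choose_succ (n : ℕ) :
    ∑ i ∈ range (n + 1), ((n + 1).choose (i + 1) : ℝ) = 2 ^ (n + 1) - 1 := by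
  have h := Nat.sum_range_choose (n + 1)
  rw [sum_range_succ', Nat.choose_zero_right] at h
  rw [eq_sub_iff_add_eq]
  exact_mod_cast h

lemma abs_eval_laguerre_le {y : ℝ} (hy : 1 ≤ y) (n : ℕ) :
    |(laguerre n).eval y| ≤ (2 ^ (n + 1) - 1) * y ^ n := by
  rw [eval_eq_sum_range' (Nat.lt_succ_of_le (natDegree_laguerre_le n)), ← sum_range_choose_succ,
    sum_mul]
  refine (abs_sum_le_sum_abs _ _).trans (sum_le_sum fun i hi => ?_)
  rw [coeff_laguerre, abs_mul, abs_div, abs_mul, abs_pow, abs_neg, abs_one, one_pow, one_mul,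
    Nat.abs_cast, Nat.abs_cast, abs_of_nonneg (by positivity)]
  gcongr
  · exact div_le_self (by positivity) (Nat.one_le_cast.mpr i.factorial_pos)
  · exact Nat.lt_succ_iff.mp (mem_range.mp hi)

lemma two_pow_succ_sub_one_sq_le (n : ℕ) :
    ((2 : ℝ) ^ (n + 1) - 1) ^ 2 ≤ 3 / 2 * (n + 1) * 4 ^ n := by
  match n with
  | 0 => norm_num
  | 1 => norm_num
  | n + 2 =>
    have ht : (1 : ℝ) ≤ 2 ^ (n + 2) := one_le_pow₀ (by norm_num)
    have hn : (0 : ℝ) ≤ n := n.cast_nonneg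
    rw [pow_succ (2 : ℝ) (n + 2), show (4 : ℝ) = 2 ^ 2 by norm_num, ← pow_mul, mul_comm 2, pow_mul]
    push_cast
    nlinarith [mul_nonneg hn (sq_nonneg ((2 : ℝ) ^ (n + 2)))]

lemma sq_eval_laguerre_div_le {y : ℝ} (hy : 1 ≤ y) (n : ℕ) :
    (laguerre n).eval y ^ 2 / (n + 1) ≤ 3 / 2 * 4 ^ n * y ^ (2 * n) := by
  rw [div_le_iff₀ n.cast_add_one_pos, ← sq_abs]
  calc |(laguerre n).eval y| ^ 2 ≤ ((2 ^ (n + 1) - 1) * y ^ n) ^ 2 := by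
        gcongr
        exact abs_eval_laguerre_le hy n
    _ = ((2 : ℝ) ^ (n + 1) - 1) ^ 2 * y ^ (2 * n) := by ring
    _ ≤ 3 / 2 * (n + 1) * 4 ^ n * y ^ (2 * n) := by
        gcongr
        exact two_pow_succ_sub_one_sq_le n
    _ = 3 / 2 * 4 ^ n * y ^ (2 * n) * (n + 1) := by ring

lemma sum_sq_eval_laguerre_div_le {y : ℝ} (hy : 1 ≤ y) (d : ℕ) :
    ∑ n ∈ range (d + 1), (laguerre n).eval y ^ 2 / (n + 1) ≤ 2 * (2 * y) ^ (2 * d) := by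
  calc ∑ n ∈ range (d + 1), (laguerre n).eval y ^ 2 / (n + 1)
      ≤ ∑ n ∈ range (d + 1), 3 / 2 * 4 ^ n * y ^ (2 * d) := by
        gcongr with n hn
        refine (sq_eval_laguerre_div_le hy n).trans ?_
        gcongr
        exact Nat.lt_succ_iff.mp (mem_range.mp hn)
    _ = (4 ^ (d + 1) - 1) / 2 * y ^ (2 * d) := by
        rw [← sum_mul, ← mul_sum, geom_sum_eq (by norm_num)]
        ring
    _ ≤ 2 * (2 * y) ^ (2 * d) := by
        have : (0 : ℝ) ≤ y ^ (2 * d) := by positivity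
        rw [mul_pow, pow_mul (2 : ℝ), show (2 : ℝ) ^ 2 = 4 by norm_num, pow_succ]
        nlinarith

theorem poly_value_le_integral (d : ℕ) (g : Polynomial ℝ) (hg : g.natDegree ≤ d)
    (y : ℝ) (hy : 1 ≤ y) :
    (g.eval y) ^ 2 ≤
      2 * (2 * y) ^ (2 * d) * ∫ x in Set.Ioi (0 : ℝ), (g.eval x) ^ 2 * (x * Real.exp (-x)) := by
  rw [show ∫ x in Set.Ioi (0 : ℝ), (g.eval x) ^ 2 * (x * exp (-x)) = weightedIntegral (g ^ 2) by
    simp only [weightedIntegral_apply, eval_pow]]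
  obtain ⟨c, rfl⟩ := exists_sum_smul_laguerre_eq hg
  calc _ ≤ weightedIntegral ((∑ n ∈ range (d + 1), c n • laguerre n) ^ 2) *
        ∑ n ∈ range (d + 1), (laguerre n).eval y ^ 2 / (n + 1) :=
        sq_eval_sum_le_of_orthogonal (w := fun n : ℕ => (n : ℝ) + 1)
          (fun n _ => n.cast_add_one_pos)
          (fun m _ n _ => weightedIntegral_laguerre_mul_laguerre m n) c y
    _ ≤ _ * (2 * (2 * y) ^ (2 * d)) := by
        gcongr
        · exact weightedIntegral_sq_nonneg _
        · exact sum_sq_eval_laguerre_div_le hy d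
    _ = _ := mul_comm _ _
end

section
/- For all k, d₂, n ∈ ℕ with 1 ≤ d₂ ≤ √n/4 and k ≤ n/4, letting Δ = 2d₂/n, we have binomial(n-k-2, d₂-1)/binomial(n-1, d₂-1) ≥ (1/2)·e^(-kΔ). -/
/-!
Write `m = d₂ - 1`. Lowering the upper index of `choose · m` by one multiplies it by
`1 - m / b ≥ 1 / (1 + Δ) ≥ exp (-Δ)`, as long as `m ≤ (b - m) Δ`; with `d₂, k ≤ n / 4` this holds
for every `b ≥ n - k - 1`. Going from `n - 1` down to `n - k - 2` takes `k + 1` such steps,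
which costs a factor `exp (-(k + 1) Δ)`, and the extra `exp (-Δ)` is at least `1 / 2` as `Δ ≤ 1 / 2`.
-/

open Real

namespace Nat

theorem cast_choose_div_choose_succ {b m : ℕ} (hmb : m ≤ b) :
    (b.choose m : ℝ) / (b + 1).choose m = (b + 1 - m) / (b + 1) := by
  have hpos : (0 : ℝ) < (b + 1).choose m := by exact_mod_cast Nat.choose_pos (by omega)
  rw [div_eq_div_iff hpos.ne' (by positivity)]
  have h := congrArg (Nat.cast : ℕ → ℝ) (Nat.choose_mul_succ_eq b m)
  push_cast [Nat.cast_sub (show m ≤ b + 1 by omega)] at h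
  linarith

theorem exp_neg_le_choose_div_choose_succ {b m : ℕ} {t : ℝ} (hmb : m ≤ b)
    (hm : (m : ℝ) ≤ (b + 1 - m) * t) :
    exp (-t) ≤ (b.choose m : ℝ) / (b + 1).choose m := by
  have hbm : (0 : ℝ) < b + 1 - m := by
    have : (m : ℝ) ≤ b := by exact_mod_cast hmb
    linarith
  rw [cast_choose_div_choose_succ hmb, exp_neg, inv_le_comm₀ (exp_pos t) (by positivity),
    inv_div, div_le_iff₀ hbm]
  nlinarith [add_one_le_exp t]

theorem exp_neg_mul_le_choose_div_choose_add {a m : ℕ} {t : ℝ} (hma : m ≤ a)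
    (hm : (m : ℝ) ≤ (a + 1 - m) * t) (j : ℕ) :
    exp (-(j * t)) ≤ (a.choose m : ℝ) / (a + j).choose m := by
  have ht : 0 ≤ t := by
    have : (m : ℝ) ≤ a := by exact_mod_cast hma
    exact nonneg_of_mul_nonneg_right ((Nat.cast_nonneg m).trans hm) (by linarith)
  induction j with
  | zero => simp [Nat.choose_pos hma |>.ne']
  | succ j ih =>
    have hstep : exp (-t) ≤ ((a + j).choose m : ℝ) / (a + j + 1).choose m := by
      refine exp_neg_le_choose_div_choose_succ (by omega) (hm.trans ?_)
      gcongr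
      linarith [(Nat.cast_nonneg j : (0 : ℝ) ≤ j)]
    have hpos : (0 : ℝ) < (a + j).choose m := by exact_mod_cast Nat.choose_pos (by omega)
    calc exp (-((j + 1 : ℕ) * t)) = exp (-(j * t)) * exp (-t) := by
          rw [← exp_add]; push_cast; ring_nf
      _ ≤ (a.choose m : ℝ) / (a + j).choose m * (((a + j).choose m : ℝ) / (a + j + 1).choose m) :=
          mul_le_mul ih hstep (exp_pos _).le (by positivity)
      _ = (a.choose m : ℝ) / (a + (j + 1)).choose m := by
          rw [div_mul_div_cancel₀ hpos.ne', add_assoc]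

end Nat

theorem choose_ratio_ge_half_exp_general (k d₂ n : ℕ) (hd₂ : 1 ≤ d₂)
    (hd₂n : (d₂ : ℝ) ≤ Real.sqrt n / 4) (hk : (k : ℝ) ≤ (n : ℝ) / 4) :
    ((n - k - 2).choose (d₂ - 1) : ℝ) / ((n - 1).choose (d₂ - 1)) ≥
      (1 / 2) * Real.exp (-(k : ℝ) * (2 * d₂ / n)) := by
  have hd₁ : (1 : ℝ) ≤ d₂ := by exact_mod_cast hd₂
  have hsqrt : √(n : ℝ) ≤ n := by
    nlinarith [mul_self_sqrt (Nat.cast_nonneg (α := ℝ) n)]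
  have hd₄ : (d₂ : ℝ) ≤ n / 4 := by linarith
  have hkn : k + 2 ≤ n := by
    have : (k : ℝ) + 2 ≤ n := by linarith
    exact_mod_cast this
  have hn : (0 : ℝ) < n := by linarith
  set Δ : ℝ := 2 * d₂ / n with hΔ
  have hΔ_half : Δ ≤ 1 / 2 := by rw [hΔ, div_le_iff₀ hn]; linarith
  have hm : (d₂ - 1 : ℕ) ≤ n - k - 2 := by
    have : (d₂ : ℝ) + k + 1 ≤ n := by linarith
    have : d₂ + k + 1 ≤ n := by exact_mod_cast this
    omega
  have hcond : ((d₂ - 1 : ℕ) : ℝ) ≤ ((n - k - 2 : ℕ) + 1 - (d₂ - 1 : ℕ)) * Δ := by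
    push_cast [Nat.cast_sub hd₂, Nat.sub_sub, Nat.cast_sub hkn]
    rw [hΔ, ← mul_div_assoc, le_div_iff₀ hn]
    nlinarith [mul_nonneg (by linarith : (0 : ℝ) ≤ d₂) (by linarith : (0 : ℝ) ≤ n - 2 * k - 2 * d₂)]
  have key := Nat.exp_neg_mul_le_choose_div_choose_add hm hcond (k + 1)
  rw [show n - k - 2 + (k + 1) = n - 1 by omega] at key
  calc 1 / 2 * exp (-k * Δ) ≤ exp (-k * Δ) * exp (-Δ) := by
        rw [mul_comm]
        gcongr
        linarith [one_sub_le_exp_neg Δ]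
    _ = exp (-((k + 1 : ℕ) * Δ)) := by rw [← exp_add]; push_cast; ring_nf
    _ ≤ _ := key

theorem choose_ratio_ge_half_exp (k d₂ n : ℕ) (hd₂ : 1 ≤ d₂)
    (hd₂n : (d₂ : ℝ) ≤ Real.sqrt n / 4) (hk : (k : ℝ) ≤ (n : ℝ) / 4)
    (hk' : k ≤ n - d₂ - 1) :
    ((n - k - 2).choose (d₂ - 1) : ℝ) / ((n - 1).choose (d₂ - 1)) ≥
      (1 / 2) * Real.exp (-(k : ℝ) * (2 * d₂ / n)) :=
  choose_ratio_ge_half_exp_general k d₂ n hd₂ hd₂n hk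
end

section
/- For all j, u ∈ ℕ with j ≥ 1, (1/j!)·∏_{a=1}^j (u - a) ≥ binomial(2j-1, j)·(u - 2j + 1), where the product and inequality are over the integers/rationals (u - a can be negative). -/
/-!
The product is the descending Pochhammer symbol evaluated at `u - 1`, so the left side is
`(-1)^j` for `u = 0` and `(u - 1).choose j` for `u ≥ 1`. Only `u - 1 ≥ 2j - 1` needs an argument:
since `C(n, j - 1) ≥ C(n, j)` for `n = 2j - 1`, Pascal's rule shows that each step `N ↦ N + 1`
beyond `n` adds at least `C(n, j)` to `C(N, j)`, whence `C(n + m, j) ≥ (m + 1) C(n, j)`.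
-/

open Finset Nat Polynomial

theorem prod_Icc_sub_eq_descPochhammer_eval {R : Type*} [CommRing R] (x : R) (j : ℕ) :
    ∏ a ∈ Icc 1 j, (x - a) = (descPochhammer R j).eval (x - 1) := by
  rw [descPochhammer_eval_eq_prod_range, ← Finset.Ico_add_one_right_eq_Icc, prod_Ico_eq_prod_range,
    Nat.add_sub_cancel]
  refine prod_congr rfl fun i _ => ?_
  push_cast
  ring

theorem descPochhammer_eval_neg_one {R : Type*} [CommRing R] (j : ℕ) :
    (descPochhammer R j).eval (-1) = (-1) ^ j * j ! := by
  have hneg := prod_neg (s := range j) fun i : ℕ => ((i + 1 : ℕ) : R)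
  rw [card_range] at hneg
  rw [descPochhammer_eval_eq_prod_range, ← prod_range_add_one_eq_factorial, Nat.cast_prod, ← hneg]
  refine prod_congr rfl fun i _ => ?_
  push_cast
  ring

theorem choose_succ_mul_succ_le_choose_add {n k : ℕ} (h : n.choose (k + 1) ≤ n.choose k)
    (m : ℕ) : n.choose (k + 1) * (m + 1) ≤ (n + m).choose (k + 1) := by
  induction m with
  | zero => simp
  | succ m ih =>
    have hmono : n.choose k ≤ (n + m).choose k := Nat.choose_le_choose k (Nat.le_add_right n m)
    rw [← add_assoc, Nat.choose_succ_succ']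
    linarith

theorem choose_mul_sub_add_one_le_choose {n k : ℕ} (h : n.choose (k + 1) ≤ n.choose k) (v : ℕ) :
    (n.choose (k + 1) : ℚ) * ((v : ℚ) - n + 1) ≤ v.choose (k + 1) := by
  rcases lt_or_ge v n with hv | hv
  · have hneg : (v : ℚ) - n + 1 ≤ 0 := by
      have : (v : ℚ) + 1 ≤ n := by exact_mod_cast hv
      linarith
    exact (mul_nonpos_of_nonneg_of_nonpos (by positivity) hneg).trans (by positivity)
  · obtain ⟨m, rfl⟩ := Nat.exists_eq_add_of_le hv
    calc (n.choose (k + 1) : ℚ) * (((n + m : ℕ) : ℚ) - n + 1)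
        = ((n.choose (k + 1) * (m + 1) : ℕ) : ℚ) := by push_cast; ring
      _ ≤ (n + m).choose (k + 1) := by exact_mod_cast choose_succ_mul_succ_le_choose_add h m

theorem falling_product_ge (j u : ℕ) (hj : 1 ≤ j) :
    (1 / (Nat.factorial j : ℚ)) * ∏ a ∈ Finset.Icc 1 j, ((u : ℚ) - a) ≥
      ((2 * j - 1).choose j : ℚ) * ((u : ℚ) - 2 * j + 1) := by
  obtain ⟨k, rfl⟩ : ∃ k, j = k + 1 := ⟨j - 1, by omega⟩
  have hfac : ((k + 1) ! : ℚ) ≠ 0 := by positivity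
  rw [show 2 * (k + 1) - 1 = 2 * k + 1 by omega, prod_Icc_sub_eq_descPochhammer_eval, ge_iff_le]
  rcases u with _ | v
  · have hC : (1 : ℚ) ≤ (2 * k + 1).choose (k + 1) := by
      exact_mod_cast Nat.choose_pos (by omega)
    have hpow : (-1 : ℚ) ≤ (-1) ^ (k + 1) := by
      rcases neg_one_pow_eq_or ℚ (k + 1) with h | h <;> norm_num [h]
    simp only [Nat.cast_zero, zero_sub]
    rw [descPochhammer_eval_neg_one, one_div_mul_eq_div, mul_div_cancel_right₀ _ hfac]
    push_cast
    nlinarith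
  · rw [Nat.cast_succ, add_sub_cancel_right, descPochhammer_eval_eq_descFactorial,
      Nat.descFactorial_eq_factorial_mul_choose, Nat.cast_mul, one_div_mul_eq_div,
      mul_div_cancel_left₀ _ hfac]
    convert choose_mul_sub_add_one_le_choose (Nat.choose_symm_half k).le v using 2
    push_cast
    ring
end
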